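/- arXiv:2407.17341 — 2 statements merged into one kernel-verified Lean document; each statement's English description precedes it below -/
import Mathlib

section
/- There exists a PCAB solution with K hyperplanes and separation error 0 if and only if the set of negative points can be partitioned into at most K subsets, each of whose convex hull is disjoint from the convex hull of the positive points. -/
/-- A PCAB solution with K hyperplanes and separation error 0 exists iff the negative
set can be partitioned into at most K subsets whose convex hulls are disjoint from the
convex hull of the positive points. -/
theorem stmt_3 (d K : ℕ) (Dpos Dneg : Set (Fin d → ℝ))
    (hPfin : Dpos.Finite) (hNfin : Dneg.Finite)
    (hdisj : convexHull ℝ Dpos ∩ Dneg = ∅) :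
    (∃ (b : Fin K → ℝ) (w : Fin K → Fin d → ℝ),
      (∀ k, ∀ a ∈ Dpos, 0 ≤ b k + ∑ j, w k j * a j) ∧
      (∀ a ∈ Dneg, ∃ k, b k + ∑ j, w k j * a j < 0)) ↔
    (∃ S : Fin K → Set (Fin d → ℝ),
      (∀ k, S k ⊆ Dneg) ∧
      (Pairwise fun k k' => Disjoint (S k) (S k')) ∧
      (⋃ k, S k) = Dneg ∧
      (∀ k, convexHull ℝ (S k) ∩ convexHull ℝ Dpos = ∅)) := by
  classical
  constructor
  · rintro ⟨b, w, hpos, hneg⟩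
    refine ⟨fun k => {a | a ∈ Dneg ∧ b k + ∑ j, w k j * a j < 0 ∧
        ∀ k', b k' + ∑ j, w k' j * a j < 0 → k ≤ k'}, fun k a ha => ha.1, ?_, ?_, ?_⟩
    · intro k k' hkk'
      rw [Set.disjoint_left]
      rintro a ⟨-, h1, h2⟩ ⟨-, h3, h4⟩
      exact hkk' (le_antisymm (h2 _ h3) (h4 _ h1))
    · ext a
      simp only [Set.mem_iUnion, Set.mem_setOf_eq]
      constructor
      · rintro ⟨k, hk, -⟩; exact hk
      · intro ha
        have hne : (Finset.univ.filter fun k => b k + ∑ j, w k j * a j < 0).Nonempty := by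
          obtain ⟨k, hk⟩ := hneg a ha
          exact ⟨k, by simp [hk]⟩
        refine ⟨(Finset.univ.filter fun k => b k + ∑ j, w k j * a j < 0).min' hne, ha, ?_, ?_⟩
        · have := Finset.min'_mem _ hne
          simpa using this
        · intro k' hk'
          exact Finset.min'_le _ _ (by simp [hk'])
    · intro k
      have hlin : IsLinearMap ℝ (fun a : Fin d → ℝ => ∑ j, w k j * a j) := by
        constructor
        · intro a a'
          simp [mul_add, Finset.sum_add_distrib]
        · intro c a
          simp [Finset.mul_sum, smul_eq_mul, mul_left_comm]
      apply Set.eq_empty_iff_forall_notMem.mpr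
      rintro x ⟨hx1, hx2⟩
      have h1 : x ∈ {a : Fin d → ℝ | (∑ j, w k j * a j) < -(b k)} := by
        refine convexHull_min ?_ (convex_halfSpace_lt hlin _) hx1
        intro a ha
        have := ha.2.1
        simp only [Set.mem_setOf_eq]
        linarith
      have h2 : x ∈ {a : Fin d → ℝ | -(b k) ≤ ∑ j, w k j * a j} := by
        refine convexHull_min ?_ (convex_halfSpace_ge hlin _) hx2
        intro a ha
        have := hpos k a ha
        simp only [Set.mem_setOf_eq]
        linarith
      simp only [Set.mem_setOf_eq] at h1 h2
      linarith
  · rintro ⟨S, hsub, hdisjS, hcup, hhull⟩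
    have key : ∀ k : Fin K, ∃ (bk : ℝ) (wk : Fin d → ℝ),
        (∀ a ∈ Dpos, 0 ≤ bk + ∑ j, wk j * a j) ∧
        (∀ a ∈ S k, bk + ∑ j, wk j * a j < 0) := by
      intro k
      obtain ⟨f, u, v, hfu, huv, hvf⟩ :=
        geometric_hahn_banach_compact_closed
          (convex_convexHull ℝ (S k)) ((hNfin.subset (hsub k)).isCompact_convexHull ℝ)
          (convex_convexHull ℝ Dpos) ((hPfin.isCompact_convexHull ℝ).isClosed)
          (Set.disjoint_iff_inter_eq_empty.mpr (hhull k))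
      have hf : ∀ a : Fin d → ℝ, (∑ j, f (Pi.single j 1) * a j) = f a := by
        intro a
        have ha : a = ∑ j, a j • (Pi.single j 1 : Fin d → ℝ) := by
          funext i
          simp [Finset.sum_apply, Pi.single_apply]
        conv_rhs => rw [ha]
        rw [map_sum]
        simp [smul_eq_mul, mul_comm]
      refine ⟨-v, fun j => f (Pi.single j 1), ?_, ?_⟩
      · intro a ha
        have := hvf a (subset_convexHull ℝ Dpos ha)
        rw [hf]
        linarith
      · intro a ha
        have := hfu a (subset_convexHull ℝ (S k) ha)
        rw [hf]
        linarith
    choose b w hb hw using key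
    refine ⟨b, w, hb, ?_⟩
    intro a ha
    rw [← hcup] at ha
    obtain ⟨k, hk⟩ := Set.mem_iUnion.mp ha
    exact ⟨k, hw k a hk⟩
end

section
/- In the deterministic hypercubic instance in dimension d with border gap 0 < γ < 1/4, no single valid hyperplane can separate two negative points that violate two different facet constraints of the unit hypercube in 'opposite' directions (e.g., one with a coordinate equal to -γ in coordinate j and another with that coordinate equal to 1+γ); consequently the minimum separation budget is at least 2. -/
/-- Positive points of the deterministic hypercubic instance. -/
def hcPos (d : ℕ) (γ : ℝ) (v : Fin d → Bool) : Fin d → ℝ :=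
  fun j => if v j then 1 - γ else γ

/-- Negative points of the deterministic hypercubic instance. -/
def hcNeg (d : ℕ) (γ : ℝ) (v : Fin d → Bool) (j' : Fin d) : Fin d → ℝ :=
  fun j => if j = j' then (if v j then 1 - 2*γ else 2*γ)
           else (if v j then 1 + γ else -γ)

lemma hc_aux (d : ℕ) (γ : ℝ) (b : ℝ) (w : Fin d → ℝ)
    (hvalid : ∀ v : Fin d → Bool, 0 ≤ b + ∑ j, w j * hcPos d γ v j)
    (p q : Fin d → ℝ) (hq : q = (fun i => 1 - p i)) :
    ¬((b + ∑ j', w j' * p j' < 0) ∧ (b + ∑ j', w j' * q j' < 0)) := by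
  rintro ⟨h1, h2⟩
  have hT := hvalid (fun _ => true)
  have hF := hvalid (fun _ => false)
  have e1 : ∑ j', w j' * p j' + ∑ j', w j' * q j' = ∑ j', w j' := by
    subst hq
    rw [← Finset.sum_add_distrib]
    apply Finset.sum_congr rfl
    intros; ring
  have e2 : (∑ j, w j * hcPos d γ (fun _ => true) j)
      + (∑ j, w j * hcPos d γ (fun _ => false) j) = ∑ j, w j := by
    rw [← Finset.sum_add_distrib]
    apply Finset.sum_congr rfl
    intro i _
    simp [hcPos]
    ring
  linarith

/-- No single valid hyperplane of the hypercubic instance can simultaneously separate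
two negative points violating opposite facet constraints (one with a coordinate `-γ`
and the symmetric one, w.r.t. the hypercube center, with that coordinate `1 + γ`);
consequently no single valid hyperplane separates all the negative points, i.e. the
minimum separation budget is at least 2. -/
theorem stmt_8 (d : ℕ) (hd : 1 ≤ d) (γ : ℝ) (hγ0 : 0 < γ) (hγ1 : γ < 1/4) :
    (∀ (b : ℝ) (w : Fin d → ℝ),
      (∀ v : Fin d → Bool, 0 ≤ b + ∑ j, w j * hcPos d γ v j) →
      ∀ (j : Fin d) (p q : Fin d → ℝ), p j = -γ → q = (fun i => 1 - p i) →
        ¬((b + ∑ j', w j' * p j' < 0) ∧ (b + ∑ j', w j' * q j' < 0))) ∧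
    (2 ≤ d →
      ¬ ∃ (b : ℝ) (w : Fin d → ℝ),
        (∀ v : Fin d → Bool, 0 ≤ b + ∑ j, w j * hcPos d γ v j) ∧
        (∀ (v : Fin d → Bool) (j' : Fin d),
          b + ∑ j, w j * hcNeg d γ v j' j < 0)) := by
  constructor
  · intro b w hvalid j p q _ hq
    exact hc_aux d γ b w hvalid p q hq
  · rintro hd2 ⟨b, w, hvalid, hneg⟩
    have h2 : 0 < d := lt_of_lt_of_le (by norm_num) hd2
    set j' : Fin d := ⟨0, h2⟩
    set p : Fin d → ℝ := hcNeg d γ (fun _ => false) j'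
    set q : Fin d → ℝ := hcNeg d γ (fun _ => true) j'
    have hq : q = (fun i => 1 - p i) := by
      funext i
      simp only [p, q, hcNeg]
      by_cases h : i = j' <;> simp [h] <;> ring
    exact hc_aux d γ b w hvalid p q hq ⟨hneg _ _, hneg _ _⟩
end
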